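/- Let n ≥ 1 and r ≥ 0 be integers and let p be a prime. If ord_p(n) > ord_p(r!), then the generalized Laguerre polynomial L_n^{⟨r⟩}(x) is p-Coleman integral. -/

import Mathlib

open Polynomial

/-- The generalized Laguerre polynomial `L_n^{⟨r⟩}(x) = Σ_{j=0}^n C(n-j+r, n-j) x^j / j!`. -/
noncomputable def laguerre (n r : ℕ) : Polynomial ℚ :=
  ∑ j ∈ Finset.range (n + 1),
    Polynomial.C (((n - j + r).choose (n - j) : ℚ) / (j.factorial : ℚ)) * Polynomial.X ^ j

/-- `k` is a pivotal index associated to `(n, p)`: writing `n` in base `p` as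
`n = b₁ p^{e₁} + ⋯ + b_s p^{e_s}` with nonzero digits `b_i` and `e₁ > ⋯ > e_s ≥ 0`,
the pivotal indices are the partial sums `k_i = b₁ p^{e₁} + ⋯ + b_i p^{e_i}`,
`i = 0, …, s`.  Equivalently, they are exactly the numbers `n - (n % p^e)` for `e : ℕ`. -/
def IsPivotal (p n k : ℕ) : Prop := ∃ e : ℕ, k = n - n % p ^ e

/-- `f(x) = Σ_{j=0}^n a_j x^j / j!` (so `a_j = j! ⬝ coeff j`) of degree `n` is
`p`-Coleman integral if `ord_p(a_j) ≥ 0` for all `j` (vacuous for `a_j = 0`, which has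
infinite valuation) and `ord_p(a_k) = 0` (in particular `a_k ≠ 0`) for each pivotal
index `k` associated to `(n, p)`. -/
def PColemanIntegral (p : ℕ) (f : Polynomial ℚ) : Prop :=
  (∀ j : ℕ, f.coeff j ≠ 0 → 0 ≤ padicValRat p ((j.factorial : ℚ) * f.coeff j)) ∧
  ∀ k : ℕ, IsPivotal p f.natDegree k →
    (k.factorial : ℚ) * f.coeff k ≠ 0 ∧ padicValRat p ((k.factorial : ℚ) * f.coeff k) = 0

lemma laguerre_coeff (n r j : ℕ) :
    (laguerre n r).coeff j =
      if j ≤ n then ((n - j + r).choose (n - j) : ℚ) / (j.factorial : ℚ) else 0 := by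
  rw [laguerre, Polynomial.finset_sum_coeff]
  simp only [Polynomial.coeff_C_mul, Polynomial.coeff_X_pow]
  by_cases hj : j ≤ n
  · rw [if_pos hj, Finset.sum_eq_single j]
    · simp
    · intro b _ hb; simp [Ne.symm hb]
    · intro hjs; exact absurd (Finset.mem_range.mpr (Nat.lt_succ_of_le hj)) hjs
  · rw [if_neg hj]
    apply Finset.sum_eq_zero
    intro b hb
    have : j ≠ b := by rw [Finset.mem_range, Nat.lt_succ_iff] at hb; omega
    simp [this]

lemma laguerre_natDegree (n r : ℕ) : (laguerre n r).natDegree = n := by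
  apply Polynomial.natDegree_eq_of_le_of_coeff_ne_zero
  · rw [Polynomial.natDegree_le_iff_coeff_eq_zero]
    intro N hN; rw [laguerre_coeff]; simp [Nat.not_le.mpr hN]
  · rw [laguerre_coeff]; simp [Nat.factorial_ne_zero]

lemma no_carry {p : ℕ} (hp : p.Prime) {v m r : ℕ} (hm : p ^ v ∣ m) (hr : r < p ^ v)
    {i : ℕ} (_hi : 1 ≤ i) : m % p ^ i + r % p ^ i < p ^ i := by
  have hpi : 0 < p ^ i := pow_pos hp.pos i
  rcases le_or_gt i v with h | h
  · have : p ^ i ∣ m := dvd_trans (pow_dvd_pow p h) hm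
    have hz : m % p ^ i = 0 := Nat.mod_eq_zero_of_dvd this
    have h4 : r % p ^ i < p ^ i := Nat.mod_lt _ hpi
    omega
  · have hvi : v ≤ i := h.le
    have hdvd : p ^ v ∣ m % p ^ i := (Nat.dvd_mod_iff (pow_dvd_pow p hvi)).mpr hm
    have h1 : m % p ^ i < p ^ i := Nat.mod_lt _ hpi
    have h2 : p ^ v ∣ p ^ i - m % p ^ i := Nat.dvd_sub (pow_dvd_pow p hvi) hdvd
    have h3 : p ^ v ≤ p ^ i - m % p ^ i := Nat.le_of_dvd (by omega) h2
    have h4 : r % p ^ i ≤ r := Nat.mod_le _ _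
    omega

lemma val_choose_eq_zero {p : ℕ} (hp : p.Prime) {v m r : ℕ} (hm : p ^ v ∣ m) (hr : r < p ^ v) :
    padicValNat p ((m + r).choose m) = 0 := by
  haveI : Fact p.Prime := ⟨hp⟩
  rw [padicValNat_choose (Nat.le_add_right m r) (Nat.lt_succ_self _)]
  rw [Finset.card_eq_zero, Finset.filter_eq_empty_iff]
  intro i hi
  rw [Finset.mem_Ico] at hi
  have := no_carry hp hm hr hi.1
  simp only [Nat.add_sub_cancel_left]
  omega

lemma r_lt_pow {p : ℕ} (hp : p.Prime) {v r : ℕ} (h : padicValNat p r.factorial < v) :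
    r < p ^ v := by
  by_contra hge
  push_neg at hge
  haveI : Fact p.Prime := ⟨hp⟩
  have h1 : p ^ v ∣ r.factorial :=
    dvd_trans (Nat.dvd_factorial (pow_pos hp.pos v) le_rfl)
      (Nat.factorial_dvd_factorial hge)
  have := (padicValNat_dvd_iff_le (Nat.factorial_ne_zero r)).mp h1
  omega

theorem laguerre_pColemanIntegral_of_ordp_lt (n r : ℕ) (hn : 1 ≤ n)
    (p : ℕ) (hp : p.Prime) (h : padicValNat p r.factorial < padicValNat p n) :
    PColemanIntegral p (laguerre n r) := by
  haveI : Fact p.Prime := ⟨hp⟩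
  set v := padicValNat p n with hv
  have hr : r < p ^ v := r_lt_pow hp h
  constructor
  · intro j hj
    rw [laguerre_coeff] at hj ⊢
    by_cases hjn : j ≤ n
    · rw [if_pos hjn, mul_div_cancel₀ _ (by exact_mod_cast j.factorial_ne_zero)]
      exact zero_le_padicValRat_of_nat _
    · exact absurd (if_neg hjn) hj
  · rintro k ⟨e, hk⟩
    rw [laguerre_natDegree] at hk
    have hkn : k ≤ n := hk ▸ Nat.sub_le n _
    have hm : n - k = n % p ^ e := by
      rw [hk, Nat.sub_sub_self (Nat.mod_le n _)]
    rw [laguerre_coeff, if_pos hkn, mul_div_cancel₀ _ (by exact_mod_cast k.factorial_ne_zero)]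
    set m : ℕ := n - k with hmdef
    have hdvd : p ^ v ∣ m := by
       rw [hm]
       rcases le_or_gt v e with hve | hev
       · exact (Nat.dvd_mod_iff (pow_dvd_pow p hve)).mpr pow_padicValNat_dvd
       · have : p ^ e ∣ n := dvd_trans (pow_dvd_pow p hev.le) pow_padicValNat_dvd
         rw [Nat.mod_eq_zero_of_dvd this]
         exact dvd_zero _
    have hsym : (m + r).choose m = (m + r).choose r := by
      rw [← Nat.choose_symm (Nat.le_add_right m r), Nat.add_sub_cancel_left]
    have hpos : 0 < (m + r).choose m := Nat.choose_pos (Nat.le_add_right m r)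
    have hval : padicValNat p ((m + r).choose m) = 0 := val_choose_eq_zero hp hdvd hr
    refine ⟨by exact_mod_cast hpos.ne', ?_⟩
    rw [show ((m + r).choose m : ℚ) = (((m + r).choose m : ℕ) : ℚ) from rfl, padicValRat.of_nat]
    exact_mod_cast hval
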